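/- arXiv:1409.3165 — 3 statements merged into one kernel-verified Lean document; each statement's English description precedes it below -/
import Mathlib

section
/- A permutation π of length n ≥ 1 avoids the mesh pattern (12, {(0,0),(0,2),(1,1)}) if and only if π(1) = n. Therefore the number of permutations of length n avoiding this pattern is (n−1)!. -/
/-- 1-based position boundaries of an occurrence: `posOf x 0 = 0`,
`posOf x i = x_i` (1-based) for `1 ≤ i ≤ k`, and `posOf x i = n+1` for `i > k`. -/
def posOf {k n : ℕ} (x : Fin k → Fin n) (i : ℕ) : ℕ :=
  if h : 1 ≤ i ∧ i ≤ k then (x ⟨i - 1, by omega⟩ : ℕ) + 1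
  else if i = 0 then 0 else n + 1

/-- 1-based value boundaries of an occurrence: `valOf τ x π 0 = 0`,
`valOf τ x π j = y_j`, the `j`-th smallest of the values `π(x_1),…,π(x_k)`
(which equals `π(x_{τ⁻¹(j)})` for an occurrence of the classical pattern `τ`),
and `n+1` for `j > k`. -/
def valOf {k n : ℕ} (τ : Equiv.Perm (Fin k)) (x : Fin k → Fin n)
    (π : Equiv.Perm (Fin n)) (j : ℕ) : ℕ :=
  if h : 1 ≤ j ∧ j ≤ k then (π (x (τ.symm ⟨j - 1, by omega⟩)) : ℕ) + 1
  else if j = 0 then 0 else n + 1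

/-- `π` (a permutation of length `n`, 0-indexed via `Fin n`) contains the mesh
pattern `(τ, R)`, where boxes in `R` are given with 0-based coordinates in `[0,k]²`.
All positions/values are converted to 1-based via `+1`. -/
def MeshOccursIn {k n : ℕ} (τ : Equiv.Perm (Fin k)) (R : Set (ℕ × ℕ))
    (π : Equiv.Perm (Fin n)) : Prop :=
  ∃ x : Fin k → Fin n, StrictMono x ∧
    (∀ a b : Fin k, π (x a) < π (x b) ↔ τ a < τ b) ∧
    ∀ r ∈ R, ∀ z : Fin n,
      ¬ (posOf x r.1 < (z : ℕ) + 1 ∧ (z : ℕ) + 1 < posOf x (r.1 + 1) ∧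
         valOf τ x π r.2 < (π z : ℕ) + 1 ∧ (π z : ℕ) + 1 < valOf τ x π (r.2 + 1))

/-- `π` avoids the mesh pattern `(τ, R)`. -/
def MeshAvoids {k n : ℕ} (τ : Equiv.Perm (Fin k)) (R : Set (ℕ × ℕ))
    (π : Equiv.Perm (Fin n)) : Prop := ¬ MeshOccursIn τ R π

-- auxiliary evaluation lemmas
lemma posOf_zero' {k n : ℕ} (x : Fin k → Fin n) : posOf x 0 = 0 := by
  simp [posOf]

lemma posOf_one' {n : ℕ} (x : Fin 2 → Fin n) : posOf x 1 = (x 0 : ℕ) + 1 := by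
  rw [posOf, dif_pos (by omega : 1 ≤ 1 ∧ 1 ≤ 2)]; rfl

lemma posOf_two' {n : ℕ} (x : Fin 2 → Fin n) : posOf x 2 = (x 1 : ℕ) + 1 := by
  rw [posOf, dif_pos (by omega : 1 ≤ 2 ∧ 2 ≤ 2)]; rfl

lemma posOf_three' {n : ℕ} (x : Fin 2 → Fin n) : posOf x 3 = n + 1 := by
  rw [posOf, dif_neg (by omega)]; rfl

lemma valOf_zero' {n : ℕ} (x : Fin 2 → Fin n) (π : Equiv.Perm (Fin n)) :
    valOf (1 : Equiv.Perm (Fin 2)) x π 0 = 0 := by simp [valOf]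

lemma valOf_one' {n : ℕ} (x : Fin 2 → Fin n) (π : Equiv.Perm (Fin n)) :
    valOf (1 : Equiv.Perm (Fin 2)) x π 1 = (π (x 0) : ℕ) + 1 := by
  rw [valOf, dif_pos (by omega : 1 ≤ 1 ∧ 1 ≤ 2)]; rfl

lemma valOf_two' {n : ℕ} (x : Fin 2 → Fin n) (π : Equiv.Perm (Fin n)) :
    valOf (1 : Equiv.Perm (Fin 2)) x π 2 = (π (x 1) : ℕ) + 1 := by
  rw [valOf, dif_pos (by omega : 1 ≤ 2 ∧ 2 ≤ 2)]; rfl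

lemma valOf_three' {n : ℕ} (x : Fin 2 → Fin n) (π : Equiv.Perm (Fin n)) :
    valOf (1 : Equiv.Perm (Fin 2)) x π 3 = n + 1 := by
  rw [valOf, dif_neg (by omega)]; rfl

lemma strictMono_fin2' {n : ℕ} (x : Fin 2 → Fin n) (h : (x 0 : ℕ) < (x 1 : ℕ)) :
    StrictMono x := by
  intro a b hab
  match a, b with
  | ⟨0, _⟩, ⟨0, _⟩ => exact absurd hab (lt_irrefl _)
  | ⟨0, _⟩, ⟨1, _⟩ => exact h
  | ⟨1, _⟩, ⟨0, _⟩ => exact absurd hab (by simp [Fin.lt_def])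
  | ⟨1, _⟩, ⟨1, _⟩ => exact absurd hab (lt_irrefl _)

lemma pat2' {n : ℕ} (π : Equiv.Perm (Fin n)) (x : Fin 2 → Fin n)
    (h : (π (x 0) : ℕ) < (π (x 1) : ℕ)) :
    ∀ a b : Fin 2, π (x a) < π (x b) ↔ (1 : Equiv.Perm (Fin 2)) a < (1 : Equiv.Perm (Fin 2)) b := by
  intro a b
  match a, b with
  | ⟨0, _⟩, ⟨0, _⟩ =>
    simp only [Equiv.Perm.one_apply, Fin.mk_zero, Fin.lt_def, Fin.val_zero]; omega
  | ⟨0, _⟩, ⟨1, _⟩ =>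
    simp only [Equiv.Perm.one_apply, Fin.mk_zero, Fin.mk_one, Fin.lt_def, Fin.val_zero, Fin.val_one]; omega
  | ⟨1, _⟩, ⟨0, _⟩ =>
    simp only [Equiv.Perm.one_apply, Fin.mk_zero, Fin.mk_one, Fin.lt_def, Fin.val_zero, Fin.val_one]; omega
  | ⟨1, _⟩, ⟨1, _⟩ =>
    simp only [Equiv.Perm.one_apply, Fin.mk_one, Fin.lt_def, Fin.val_one]; omega

def subtype_fst_eq_equiv {α β : Type*} (a : α) : {q : α × β // q.1 = a} ≃ β where
  toFun q := q.1.2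
  invFun b := ⟨(a, b), rfl⟩
  left_inv q := by
    obtain ⟨⟨a', b⟩, h⟩ := q
    simp at h
    subst h
    rfl
  right_inv b := rfl

/-- A permutation of length `n ≥ 1` avoids `(12, {(0,0),(0,2),(1,1)})` iff it starts with `n`; hence `(n-1)!` avoiders. -/
theorem stmt4 (n : ℕ) (hn : 1 ≤ n) :
    (∀ π : Equiv.Perm (Fin n),
      MeshAvoids (1 : Equiv.Perm (Fin 2)) {(0,0),(0,2),(1,1)} π ↔ π ⟨0, by omega⟩ = ⟨n - 1, by omega⟩) ∧
    Nat.card {π : Equiv.Perm (Fin n) //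
      MeshAvoids (1 : Equiv.Perm (Fin 2)) {(0,0),(0,2),(1,1)} π} = (n - 1).factorial := by
  obtain ⟨A, rfl⟩ : ∃ A, n = A + 1 := ⟨n - 1, by omega⟩
  have key : ∀ π : Equiv.Perm (Fin (A + 1)),
      MeshAvoids (1 : Equiv.Perm (Fin 2)) {(0,0),(0,2),(1,1)} π ↔
        π ⟨0, by omega⟩ = ⟨A + 1 - 1, by omega⟩ := by
    intro π
    constructor
    · intro hav
      by_contra hne
      apply hav
      obtain ⟨p0, hp0⟩ : ∃ p0 : Fin (A + 1), π ⟨0, by omega⟩ = p0 := ⟨_, rfl⟩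
      have hm : (p0 : ℕ) < A := by
        have h1 := p0.isLt
        have h2 : (p0 : ℕ) ≠ A := fun h => hne (by rw [hp0]; exact Fin.ext (by simpa using h))
        omega
      obtain ⟨q, hq⟩ : ∃ q : Fin (A + 1), π q = ⟨(p0 : ℕ) + 1, by omega⟩ :=
        ⟨π.symm _, Equiv.apply_symm_apply _ _⟩
      have hq0 : 0 < (q : ℕ) := by
        rcases Nat.eq_zero_or_pos (q : ℕ) with h | h
        · exfalso
          have hq' : q = ⟨0, by omega⟩ := Fin.ext h
          rw [hq', hp0] at hq
          have := congrArg Fin.val hq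
          simp at this
        · exact h
      set x : Fin 2 → Fin (A + 1) := ![⟨0, by omega⟩, q] with hx
      have hx0 : x 0 = ⟨0, by omega⟩ := rfl
      have hx1 : x 1 = q := rfl
      have hx0v : (x 0 : ℕ) = 0 := rfl
      have hv0 : (π (x 0) : ℕ) = (p0 : ℕ) := by rw [hx0, hp0]
      have hv1 : (π (x 1) : ℕ) = (p0 : ℕ) + 1 := by rw [hx1, hq]
      refine ⟨x, ?_, ?_, ?_⟩
      · exact strictMono_fin2' x (by rw [hx0, hx1]; exact hq0)
      · exact pat2' π x (by omega)
      · intro r hr z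
        simp only [Set.mem_insert_iff, Set.mem_singleton_iff] at hr
        rcases hr with rfl | rfl | rfl
        · rintro ⟨h1, h2, h3, h4⟩
          rw [posOf_one', hx0v] at h2
          omega
        · rintro ⟨h1, h2, h3, h4⟩
          rw [posOf_one', hx0v] at h2
          omega
        · rintro ⟨h1, h2, h3, h4⟩
          rw [valOf_one', hv0] at h3
          rw [valOf_two', hv1] at h4
          omega
    · intro h0 ⟨x, hmono, hpat, hbox⟩
      have hlt : (π (x 0) : ℕ) < (π (x 1) : ℕ) := by
        have := (hpat 0 1).mpr (by
          simp only [Equiv.Perm.one_apply, Fin.lt_def, Fin.val_zero, Fin.val_one]; omega)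
        exact this
      have hx01 : (x 0 : ℕ) < (x 1 : ℕ) := hmono (by simp only [Fin.lt_def]; omega)
      have hA : (π ⟨0, by omega⟩ : ℕ) = A := by rw [h0]; rfl
      have hx0ne : (x 0 : ℕ) ≠ 0 := by
        intro h
        have hx0e : x 0 = ⟨0, by omega⟩ := Fin.ext h
        rw [hx0e] at hlt
        rw [hA] at hlt
        have h2 := (π (x 1)).isLt
        omega
      have hx1v : (π (x 1) : ℕ) < A := by
        have h1 := (π (x 1)).isLt
        have hne : (π (x 1) : ℕ) ≠ A := by
          intro h
          have he : π (x 1) = π ⟨0, by omega⟩ := Fin.ext (by rw [hA]; exact h)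
          have h6 : (x 1 : ℕ) = 0 := by rw [π.injective he]
          omega
        omega
      refine hbox (0, 2) (by simp) ⟨0, by omega⟩ ?_
      refine ⟨?_, ?_, ?_, ?_⟩
      · rw [posOf_zero']
        show 0 < 0 + 1
        omega
      · rw [posOf_one']
        show 0 + 1 < (x 0 : ℕ) + 1
        omega
      · rw [valOf_two']
        show (π (x 1) : ℕ) + 1 < (π ⟨0, by omega⟩ : ℕ) + 1
        rw [hA]
        omega
      · rw [valOf_three']
        show (π ⟨0, by omega⟩ : ℕ) + 1 < A + 1 + 1
        rw [hA]
        omega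
  refine ⟨key, ?_⟩
  have hset : ∀ π : Equiv.Perm (Fin (A + 1)),
      MeshAvoids (1 : Equiv.Perm (Fin 2)) {(0,0),(0,2),(1,1)} π ↔
        π 0 = (⟨A, by omega⟩ : Fin (A + 1)) := by
    intro π
    rw [key π]
    constructor <;> intro h <;> exact h
  have e1 : {π : Equiv.Perm (Fin (A + 1)) //
      MeshAvoids (1 : Equiv.Perm (Fin 2)) {(0,0),(0,2),(1,1)} π} ≃
      {π : Equiv.Perm (Fin (A + 1)) // π 0 = (⟨A, by omega⟩ : Fin (A + 1))} :=
    Equiv.subtypeEquivRight hset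
  have hdec : ∀ π : Equiv.Perm (Fin (A + 1)), (Equiv.Perm.decomposeFin π).1 = π 0 := by
    intro π
    have := Equiv.Perm.decomposeFin_symm_apply_zero
      (Equiv.Perm.decomposeFin π).1 (Equiv.Perm.decomposeFin π).2
    rw [show ((Equiv.Perm.decomposeFin π).1, (Equiv.Perm.decomposeFin π).2) =
      Equiv.Perm.decomposeFin π from rfl, Equiv.symm_apply_apply] at this
    exact this.symm
  have e2a : {π : Equiv.Perm (Fin (A + 1)) // π 0 = (⟨A, by omega⟩ : Fin (A + 1))} ≃
      {q : Fin (A + 1) × Equiv.Perm (Fin A) // q.1 = (⟨A, by omega⟩ : Fin (A + 1))} :=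
    Equiv.Perm.decomposeFin.subtypeEquiv (fun π => by rw [hdec π])
  have e2b : {q : Fin (A + 1) × Equiv.Perm (Fin A) // q.1 = (⟨A, by omega⟩ : Fin (A + 1))} ≃
      Equiv.Perm (Fin A) := subtype_fst_eq_equiv _
  rw [Nat.card_congr ((e1.trans e2a).trans e2b), Nat.card_eq_fintype_card, Fintype.card_perm,
    Fintype.card_fin]
  simp
end

section
/- Let a_n be the number of permutations of length n avoiding the mesh pattern (12, {(0,1),(0,2),(1,0),(2,0)}), and let b_m be the number of permutations of length m with no strong fixed point (with b_0 = 1). Then a_n = b_n + b_{n−1} for all n ≥ 1, and consequently, as formal power series over ℚ, the sum Σ_{n≥1} (a_n/n) x^n equals log(1 + Σ_{m≥1} (m−1)!·x^m); that is, a_n = n·[x^n] log(1 + Σ_{m≥1} (m−1)!·x^m). -/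
/-- `π` has a strong fixed point: an index `i` with `π(i) = i`, `π(j) < i`
for all `j < i` and `π(j) > i` for all `j > i` (0-indexed). -/
def HasStrongFixedPoint {n : ℕ} (π : Equiv.Perm (Fin n)) : Prop :=
  ∃ i : Fin n, π i = i ∧ (∀ j : Fin n, j < i → π j < i) ∧ ∀ j : Fin n, i < j → i < π j


/-!
An occurrence of the mesh pattern `(12, {(0,1),(0,2),(1,0),(2,0)})` is exactly a strong fixed
point followed by some other entry, so a permutation of length `n + 1` avoids it iff it has no
strong fixed point or its first strong fixed point is its last entry. A permutation whose first
strong fixed point is at position `m` is `σ ⊕ 1 ⊕ τ` with `σ` free of strong fixed points, which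
gives `a (n+1) = b (n+1) + b n` and `n! = b n + ∑_{i<n} b i · (n-1-i)!`.

With `F = ∑ n! xⁿ` and `B = ∑ bₙ xⁿ` the second identity reads `F = B (1 + xF)`, and the first
one `x L' = (1 + x) B - 1` for `L = ∑ (aₙ/n) xⁿ`. Hence
`x (1 + xF) L' = (1 + x) F - (1 + xF) = F - 1 = x (xF)'`, and `xF = ∑_{m≥1} (m-1)! xᵐ`.
-/

open Equiv Nat

variable {n m k : ℕ}

section StrongFixedPoint

def IsStrongFixedPt (π : Perm (Fin n)) (i : Fin n) : Prop :=
  π i = i ∧ (∀ j, j < i → π j < i) ∧ ∀ j, i < j → i < π j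

theorem hasStrongFixedPoint_iff {π : Perm (Fin n)} :
    HasStrongFixedPoint π ↔ ∃ i, IsStrongFixedPt π i :=
  Iff.rfl

theorem IsStrongFixedPt.apply_le {π : Perm (Fin n)} {i j : Fin n} (h : IsStrongFixedPt π i)
    (hj : j ≤ i) : π j ≤ i := by
  rcases hj.eq_or_lt with rfl | hj
  · exact h.1.le
  · exact (h.2.1 j hj).le

theorem isStrongFixedPt_iff {π : Perm (Fin n)} {i : Fin n} :
    IsStrongFixedPt π i ↔ (∀ j, j < i → π j < π i) ∧ ∀ j, i < j → π i < π j := by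
  refine ⟨fun ⟨hfix, hlt, hgt⟩ => by rw [hfix]; exact ⟨hlt, hgt⟩, fun ⟨hlt, hgt⟩ => ?_⟩
  have hfix : π i = i := by
    have hle := Finset.card_le_card_of_injOn π (s := Finset.Iio i) (t := Finset.Iio (π i))
      (fun j hj => by simpa using hlt j (by simpa using hj)) π.injective.injOn
    have hge := Finset.card_le_card_of_injOn π (s := Finset.Ioi i) (t := Finset.Ioi (π i))
      (fun j hj => by simpa using hgt j (by simpa using hj)) π.injective.injOn
    simp only [Fin.card_Iio, Fin.card_Ioi] at hle hge
    omega
  rw [hfix] at hlt hgt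
  exact ⟨hfix, hlt, hgt⟩

def IsFirstStrongFixedPt (π : Perm (Fin n)) (i : Fin n) : Prop :=
  IsStrongFixedPt π i ∧ ∀ j < i, ¬ IsStrongFixedPt π j

theorem IsFirstStrongFixedPt.unique {π : Perm (Fin n)} {i j : Fin n}
    (hi : IsFirstStrongFixedPt π i) (hj : IsFirstStrongFixedPt π j) : i = j := by
  rcases lt_trichotomy i j with h | h | h
  · exact (hj.2 i h hi.1).elim
  · exact h
  · exact (hi.2 j h hj.1).elim

theorem exists_isFirstStrongFixedPt {π : Perm (Fin n)} (h : HasStrongFixedPoint π) :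
    ∃ i, IsFirstStrongFixedPt π i := by
  obtain ⟨i, hi, hmin⟩ := wellFounded_lt.has_min {i | IsStrongFixedPt π i} h
  exact ⟨i, hi, fun j hj hsj => hmin j hsj hj⟩

end StrongFixedPoint

section MeshPattern

/-- The last four conjuncts say that the boxes `(0,1)`, `(0,2)`, `(1,0)`, `(2,0)` of the
occurrence `i < j` are empty. -/
theorem meshOccursIn_iff_exists (π : Perm (Fin n)) :
    MeshOccursIn (1 : Perm (Fin 2)) {(0,1),(0,2),(1,0),(2,0)} π ↔
      ∃ i j : Fin n, i < j ∧ π i < π j ∧ (∀ z < i, π i < π z → π j ≤ π z) ∧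
        (∀ z < i, π z ≤ π j) ∧ (∀ z, i < z → z < j → π i ≤ π z) ∧ ∀ z, j < z → π i ≤ π z := by
  constructor
  · rintro ⟨x, hmono, hord, hbox⟩
    refine ⟨x 0, x 1, hmono (by decide), (hord 0 1).2 (by decide), ?_⟩
    simpa [posOf, valOf, Perm.one_def, fun a : Fin n => not_le.2 a.isLt] using hbox
  · rintro ⟨i, j, hij, hπ, hbox⟩
    refine ⟨![i, j], ?_, ?_, ?_⟩
    · simpa [Fin.strictMono_iff_lt_succ] using hij
    · simp [Fin.forall_fin_two, hπ, hπ.le]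
    · simpa [posOf, valOf, Perm.one_def, fun a : Fin n => not_le.2 a.isLt] using hbox

theorem meshOccursIn_iff (π : Perm (Fin n)) :
    MeshOccursIn (1 : Perm (Fin 2)) {(0,1),(0,2),(1,0),(2,0)} π ↔
      ∃ i j : Fin n, i < j ∧ IsStrongFixedPt π i := by
  rw [meshOccursIn_iff_exists]
  constructor
  · rintro ⟨i, j, hij, hπ, hb01, hb02, hb10, hb20⟩
    refine ⟨i, j, hij, isStrongFixedPt_iff.2 ⟨fun z hz => ?_, fun z hz => ?_⟩⟩
    · have h0 : π z ≠ π i := π.injective.ne hz.ne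
      have h1 : π z ≠ π j := π.injective.ne (hz.trans hij).ne
      grind
    · have h0 : π z ≠ π i := π.injective.ne hz.ne'
      grind
  · rintro ⟨i, j, hij, hi⟩
    obtain ⟨hlt, hgt⟩ := isStrongFixedPt_iff.1 hi
    exact ⟨i, j, hij, hgt j hij, fun z hz h => ((hlt z hz).not_gt h).elim,
      fun z hz => ((hlt z hz).trans (hgt j hij)).le, fun z hz _ => (hgt z hz).le,
      fun z hz => (hgt z (hij.trans hz)).le⟩

theorem meshAvoids_iff_isFirstStrongFixedPt_last (π : Perm (Fin (n + 1))) :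
    MeshAvoids (1 : Perm (Fin 2)) {(0,1),(0,2),(1,0),(2,0)} π ↔
      ¬ HasStrongFixedPoint π ∨ IsFirstStrongFixedPt π (Fin.last n) := by
  rw [MeshAvoids, meshOccursIn_iff, or_iff_not_imp_left, not_not]
  constructor
  · intro h hπ
    obtain ⟨i, hi⟩ := exists_isFirstStrongFixedPt hπ
    obtain rfl : i = Fin.last n := by
      by_contra hne
      exact h ⟨i, Fin.last n, Fin.lt_last_iff_ne_last.2 hne, hi.1⟩
    exact hi
  · rintro h ⟨i, j, hij, hi⟩
    exact (h ⟨i, hi⟩).2 i (hij.trans_le (Fin.le_last j)) hi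

end MeshPattern

section DirectSum

def sumPerm (σ : Perm (Fin m)) (τ : Perm (Fin k)) : Perm (Fin (m + k)) :=
  finSumFinEquiv.permCongr (σ.sumCongr τ)

@[simp]
theorem sumPerm_castAdd (σ : Perm (Fin m)) (τ : Perm (Fin k)) (i : Fin m) :
    sumPerm σ τ (Fin.castAdd k i) = Fin.castAdd k (σ i) := by
  simp [sumPerm]

@[simp]
theorem sumPerm_natAdd (σ : Perm (Fin m)) (τ : Perm (Fin k)) (i : Fin k) :
    sumPerm σ τ (Fin.natAdd m i) = Fin.natAdd m (τ i) := by
  simp [sumPerm]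

theorem sumPerm_injective2 : Function.Injective2 (sumPerm (m := m) (k := k)) := by
  intro σ σ' τ τ' h
  have : Perm.sumCongrHom _ _ (σ, τ) = Perm.sumCongrHom _ _ (σ', τ') :=
    finSumFinEquiv.permCongr.injective h
  simpa using Perm.sumCongrHom_injective this

theorem exists_sumPerm_eq {π : Perm (Fin (m + k))}
    (h : ∀ i : Fin m, (π (Fin.castAdd k i) : ℕ) < m) : ∃ σ τ, sumPerm σ τ = π := by
  have hmaps : Set.MapsTo (finSumFinEquiv.symm.permCongr π) (Set.range Sum.inl)
      (Set.range Sum.inl) := by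
    rintro _ ⟨i, rfl⟩
    refine ⟨⟨_, h i⟩, ?_⟩
    rw [permCongr_apply, symm_symm, finSumFinEquiv_apply_left,
      ← finSumFinEquiv_symm_apply_castAdd]
    rfl
  obtain ⟨⟨σ, τ⟩, hστ⟩ := Perm.mem_sumCongrHom_range_of_perm_mapsTo_inl hmaps
  refine ⟨σ, τ, ?_⟩
  change finSumFinEquiv.permCongr (Perm.sumCongrHom _ _ (σ, τ)) = π
  rw [hστ, ← permCongr_symm, apply_symm_apply]

theorem isStrongFixedPt_sumPerm_castAdd (σ : Perm (Fin m)) (τ : Perm (Fin k)) (i : Fin m) :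
    IsStrongFixedPt (sumPerm σ τ) (Fin.castAdd k i) ↔ IsStrongFixedPt σ i := by
  have hi := i.isLt
  simp only [IsStrongFixedPt, Fin.forall_fin_add, Fin.lt_def, Fin.ext_iff, sumPerm_castAdd,
    sumPerm_natAdd, Fin.val_castAdd, Fin.val_natAdd]
  constructor
  · rintro ⟨hfix, ⟨hlt, -⟩, hgt, -⟩
    exact ⟨hfix, hlt, hgt⟩
  · rintro ⟨hfix, hlt, hgt⟩
    exact ⟨hfix, ⟨hlt, fun j hj => by omega⟩, hgt, fun j _ => by omega⟩

theorem isStrongFixedPt_sumPerm_natAdd (σ : Perm (Fin m)) (τ : Perm (Fin k)) (i : Fin k) :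
    IsStrongFixedPt (sumPerm σ τ) (Fin.natAdd m i) ↔ IsStrongFixedPt τ i := by
  simp only [IsStrongFixedPt, Fin.forall_fin_add, Fin.lt_def, Fin.ext_iff, sumPerm_castAdd,
    sumPerm_natAdd, Fin.val_castAdd, Fin.val_natAdd, Nat.add_left_cancel_iff,
    Nat.add_lt_add_iff_left]
  constructor
  · rintro ⟨hfix, ⟨-, hlt⟩, -, hgt⟩
    exact ⟨hfix, hlt, hgt⟩
  · rintro ⟨hfix, hlt, hgt⟩
    refine ⟨hfix, ⟨fun j _ => ?_, hlt⟩, fun j hj => ?_, hgt⟩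
    · have := (σ j).isLt
      omega
    · have := j.isLt
      omega

/-- `σ ⊕ 1 ⊕ τ`; every permutation with a strong fixed point at `m` is of this form. -/
def sumFixPerm (σ : Perm (Fin m)) (τ : Perm (Fin k)) : Perm (Fin (m + 1 + k)) :=
  sumPerm (sumPerm σ 1) τ

theorem isFirstStrongFixedPt_sumFixPerm_iff (σ : Perm (Fin m)) (τ : Perm (Fin k)) :
    IsFirstStrongFixedPt (sumFixPerm σ τ) (Fin.castAdd k (Fin.natAdd m 0)) ↔
      ¬ HasStrongFixedPoint σ := by
  simp only [IsFirstStrongFixedPt, sumFixPerm, isStrongFixedPt_sumPerm_castAdd,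
    isStrongFixedPt_sumPerm_natAdd, Fin.forall_fin_add, hasStrongFixedPoint_iff, Fin.lt_def,
    Fin.val_castAdd, Fin.val_natAdd]
  have h1 : IsStrongFixedPt (1 : Perm (Fin 1)) 0 := by simp [IsStrongFixedPt]
  simp [h1, fun j : ℕ => show ¬ m + 1 + j < m by omega]

theorem card_isFirstStrongFixedPt (h : n = m + 1 + k) (i : Fin n) (hi : (i : ℕ) = m) :
    Nat.card {π : Perm (Fin n) // IsFirstStrongFixedPt π i} =
      Nat.card {σ : Perm (Fin m) // ¬ HasStrongFixedPoint σ} * k ! := by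
  subst h
  obtain rfl : i = Fin.castAdd k (Fin.natAdd m 0) := Fin.ext hi
  let e : {p : Perm (Fin m) × Perm (Fin k) // ¬ HasStrongFixedPoint p.1} ≃
      {π : Perm (Fin (m + 1 + k)) // IsFirstStrongFixedPt π (Fin.castAdd k (Fin.natAdd m 0))} :=
    Equiv.ofBijective
      (fun p => ⟨sumFixPerm p.1.1 p.1.2, (isFirstStrongFixedPt_sumFixPerm_iff _ _).2 p.2⟩) <| by
      refine ⟨fun p q hpq => ?_, fun ⟨π, hπ⟩ => ?_⟩
      · obtain ⟨hA, hτ⟩ := sumPerm_injective2 (congrArg Subtype.val hpq)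
        exact Subtype.ext (Prod.ext (sumPerm_injective2 hA).1 hτ)
      · obtain ⟨A, τ, rfl⟩ := exists_sumPerm_eq (π := π) fun j =>
          Nat.lt_succ_of_le (hπ.1.apply_le (Fin.le_def.2 (Nat.le_of_lt_succ j.isLt)))
        obtain ⟨σ, ρ, rfl⟩ := exists_sumPerm_eq (π := A) fun j =>
          ((isStrongFixedPt_sumPerm_castAdd _ _ _).1 hπ.1).2.1 (Fin.castAdd 1 j) j.isLt
        obtain rfl := Subsingleton.elim ρ 1
        exact ⟨⟨(σ, τ), (isFirstStrongFixedPt_sumFixPerm_iff σ τ).1 hπ⟩, rfl⟩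
  rw [← Nat.card_congr e, Nat.card_congr (prodSubtypeFstEquivSubtypeProd
    (p := fun σ : Perm (Fin m) => ¬ HasStrongFixedPoint σ)), Nat.card_prod, Nat.card_perm,
    Nat.card_fin]

end DirectSum

section Counting

noncomputable def numWithoutStrongFixedPt (m : ℕ) : ℕ :=
  Nat.card {σ : Perm (Fin m) // ¬ HasStrongFixedPoint σ}

theorem card_hasStrongFixedPoint (n : ℕ) :
    Nat.card {π : Perm (Fin n) // HasStrongFixedPoint π} =
      ∑ i : Fin n, Nat.card {π : Perm (Fin n) // IsFirstStrongFixedPt π i} := by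
  rw [← Nat.card_sigma]
  refine Nat.card_congr (Equiv.ofBijective (fun p => ⟨p.2.1, p.1, p.2.2.1⟩) ⟨?_, ?_⟩).symm
  · rintro ⟨i, π, hi⟩ ⟨j, π', hj⟩ h
    obtain rfl : π = π' := congrArg Subtype.val h
    obtain rfl := hi.unique hj
    rfl
  · rintro ⟨π, hπ⟩
    obtain ⟨i, hi⟩ := exists_isFirstStrongFixedPt hπ
    exact ⟨⟨i, π, hi⟩, rfl⟩

theorem factorial_eq_numWithoutStrongFixedPt_add_sum (n : ℕ) :
    n ! = numWithoutStrongFixedPt n +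
      ∑ i ∈ Finset.range n, numWithoutStrongFixedPt i * (n - 1 - i)! := by
  classical
  have hsplit := Nat.card_congr (Equiv.sumCompl fun π : Perm (Fin n) => HasStrongFixedPoint π)
  rw [Nat.card_sum, Nat.card_perm, Nat.card_fin, card_hasStrongFixedPoint] at hsplit
  rw [← hsplit, add_comm, numWithoutStrongFixedPt, ← Fin.sum_univ_eq_sum_range]
  congr 1
  exact Finset.sum_congr rfl fun i _ => card_isFirstStrongFixedPt (by omega) i rfl

theorem card_meshAvoids (n : ℕ) :
    Nat.card {π : Perm (Fin (n + 1)) //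
        MeshAvoids (1 : Perm (Fin 2)) {(0,1),(0,2),(1,0),(2,0)} π} =
      numWithoutStrongFixedPt (n + 1) + numWithoutStrongFixedPt n := by
  classical
  have hdisj : Disjoint (fun π : Perm (Fin (n + 1)) => ¬ HasStrongFixedPoint π)
      (IsFirstStrongFixedPt · (Fin.last n)) := by
    simp only [Pi.disjoint_iff, Prop.disjoint_iff]
    exact fun π ⟨hπ, hlast⟩ => hπ ⟨_, hlast.1⟩
  rw [Nat.card_congr (Equiv.subtypeEquivRight meshAvoids_iff_isFirstStrongFixedPt_last),
    Nat.card_congr (subtypeOrEquiv _ _ hdisj), Nat.card_sum,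
    card_isFirstStrongFixedPt (k := 0) rfl (Fin.last n) rfl, factorial_zero, mul_one]
  rfl

end Counting

namespace PowerSeries

variable {K : Type*} [Field K] [CharZero K]

theorem X_mul_derivative_mk_div (c : ℕ → K) :
    X * derivative K (mk fun n => c n / n) = mk c - C (c 0) := by
  ext (_ | n)
  · simp
  · rw [coeff_succ_X_mul, coeff_derivative, coeff_mk]
    simp [div_mul_cancel₀ _ (Nat.cast_add_one_ne_zero (R := K) n)]

theorem one_add_mul_derivative_eq_of_factorial_eq (a b : ℕ → K) (hb0 : b 0 = 1)
    (hab : ∀ n, a (n + 1) = b (n + 1) + b n)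
    (hfact : ∀ n, (n ! : K) = b n + ∑ i ∈ Finset.range n, b i * ((n - 1 - i)! : K)) :
    (1 + mk fun m => if m = 0 then (0 : K) else ((m - 1)! : K)) *
        derivative K (mk fun n => a n / n) =
      derivative K (mk fun m => if m = 0 then (0 : K) else ((m - 1)! : K)) := by
  set F : K⟦X⟧ := mk fun n => (n ! : K)
  set B : K⟦X⟧ := mk b
  have hG : (mk fun m => if m = 0 then (0 : K) else ((m - 1)! : K)) =
      mk fun n => (n ! : K) / n := by
    ext (_ | n)
    · simp
    · simp [Nat.factorial_succ, mul_div_cancel_left₀ _ (Nat.cast_add_one_ne_zero (R := K) n)]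
  have hGX : (mk fun n => (n ! : K) / n) = X * F := by
    ext (_ | n)
    · simp
    · simp [F, coeff_succ_X_mul, Nat.factorial_succ,
        mul_div_cancel_left₀ _ (Nat.cast_add_one_ne_zero (R := K) n)]
  have hA : mk a - C (a 0) = (1 + X) * B - 1 := by
    ext (_ | n)
    · simp [B, hb0]
    · simp [B, add_mul, coeff_succ_X_mul, hab]
  have hF : F = B + X * (B * F) := by
    ext (_ | n)
    · simp [F, B, hb0]
    · rw [map_add, coeff_succ_X_mul, coeff_mul, Finset.Nat.sum_antidiagonal_eq_sum_range_succ_mk]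
      simpa [F, B] using hfact (n + 1)
  have hL := X_mul_derivative_mk_div a
  have hD := X_mul_derivative_mk_div fun n => (n ! : K)
  rw [hG]
  apply X_mul_cancel
  rw [hGX] at hD ⊢
  simp only [factorial_zero, cast_one, map_one] at hD
  linear_combination (1 + X * F) * hL + (1 + X * F) * hA - hD - (1 + X) * hF

end PowerSeries

/-- `log (1 + G)` is encoded as the series `L` with constant term `0` and `(1 + G) L' = G'`. -/
theorem stmt10 (a b : ℕ → ℕ)
    (ha : ∀ n, a n = Nat.card {π : Equiv.Perm (Fin n) //
      MeshAvoids (1 : Equiv.Perm (Fin 2)) {(0,1),(0,2),(1,0),(2,0)} π})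
    (hb : ∀ m, b m = Nat.card {π : Equiv.Perm (Fin m) // ¬ HasStrongFixedPoint π}) :
    (∀ n, 1 ≤ n → a n = b n + b (n - 1)) ∧
    PowerSeries.constantCoeff (PowerSeries.mk fun n => (a n : ℚ) / n) = 0 ∧
    (1 + PowerSeries.mk fun m => if m = 0 then (0 : ℚ) else ((m - 1).factorial : ℚ)) *
        PowerSeries.derivative ℚ (PowerSeries.mk fun n => (a n : ℚ) / n) =
      PowerSeries.derivative ℚ
        (PowerSeries.mk fun m => if m = 0 then (0 : ℚ) else ((m - 1).factorial : ℚ)) := by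
  have hb' : b = numWithoutStrongFixedPt := funext hb
  have hab : ∀ n, a (n + 1) = b (n + 1) + b n := fun n => by rw [ha, hb', card_meshAvoids]
  have hfact := factorial_eq_numWithoutStrongFixedPt_add_sum
  rw [← hb'] at hfact
  refine ⟨fun n hn => ?_, by simp, ?_⟩
  · obtain ⟨n, rfl⟩ := Nat.exists_eq_add_of_le' hn
    exact hab n
  · refine PowerSeries.one_add_mul_derivative_eq_of_factorial_eq (fun n => (a n : ℚ))
      (fun n => (b n : ℚ)) ?_ (fun n => ?_) fun n => ?_
    · simpa using (hfact 0).symm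
    · exact_mod_cast hab n
    · exact_mod_cast hfact n
end

section
/- Every permutation that contains the classical pattern 12, i.e. the mesh pattern (12, ∅), also contains the mesh pattern (12, {(0,0),(0,1),(1,2),(2,2)}). Hence these two patterns are coincident: a permutation avoids one if and only if it avoids the other, and for every n the unique permutation of length n avoiding (12, {(0,0),(0,1),(1,2),(2,2)}) is the decreasing permutation n(n−1)⋯1, so the number of avoiders of length n is 1. -/
/-!
Among all ascents `π i < π j` (`i < j`), take one whose top `π j` is as large as possible and,
for that top, whose bottom `i` is leftmost. Maximality of `π j` empties the region to the right
of `i` above `π j`, and leftmost-ness of `i` empties the region to the left of `i` below `π j`;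
these regions cover the four shaded boxes. So a permutation contains the mesh pattern as soon as
it has an ascent, and the only permutation without an ascent is the decreasing one.
-/

open Function

theorem MeshOccursIn.mono {k n : ℕ} {τ : Equiv.Perm (Fin k)} {R S : Set (ℕ × ℕ)}
    {π : Equiv.Perm (Fin n)} (h : MeshOccursIn τ S π) (hRS : R ⊆ S) : MeshOccursIn τ R π :=
  let ⟨x, hx, hτ, hS⟩ := h
  ⟨x, hx, hτ, fun r hr => hS r (hRS hr)⟩

theorem exists_ascent_maxTop_minBottom {ι α : Type*} [Fintype ι] [LinearOrder ι] [LinearOrder α]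
    {f : ι → α} (h : ∃ i j, i < j ∧ f i < f j) :
    ∃ i j, i < j ∧ f i < f j ∧ (∀ z < i, f j ≤ f z) ∧ ∀ z, i < z → f z ≤ f j := by
  classical
  obtain ⟨j, hj, hjmax⟩ := Finset.exists_max_image {b | ∃ a < b, f a < f b} f
    (let ⟨i, j, hij⟩ := h; ⟨j, by simpa using ⟨i, hij⟩⟩)
  simp only [Finset.mem_filter, Finset.mem_univ, true_and] at hj hjmax
  obtain ⟨i, hi, himin⟩ := Finset.exists_min_image {a | a < j ∧ f a < f j} id
    (let ⟨a, ha⟩ := hj; ⟨a, by simpa using ha⟩)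
  simp only [Finset.mem_filter, Finset.mem_univ, true_and, id] at hi himin
  refine ⟨i, j, hi.1, hi.2, fun z hz => ?_, fun z hz => ?_⟩
  · by_contra! hfz
    exact (himin z ⟨hz.trans hi.1, hfz⟩).not_gt hz
  · by_contra! hfz
    exact (hjmax z ⟨i, hz, hi.2.trans hfz⟩).not_gt hfz

theorem strictAnti_of_not_exists_lt {ι α : Type*} [LinearOrder ι] [LinearOrder α] {f : ι → α}
    (hf : Injective f) (h : ¬ ∃ i j, i < j ∧ f i < f j) : StrictAnti f :=
  (antitone_iff_forall_lt.2 fun i j hij => not_lt.1 fun hlt => h ⟨i, j, hij, hlt⟩)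
    |>.strictAnti_of_injective hf

section

variable {n : ℕ} {π : Equiv.Perm (Fin n)}

theorem exists_ascent_of_meshOccursIn_one {R : Set (ℕ × ℕ)}
    (h : MeshOccursIn (1 : Equiv.Perm (Fin 2)) R π) : ∃ i j, i < j ∧ π i < π j :=
  let ⟨x, hx, hτ, _⟩ := h
  ⟨x 0, x 1, hx Fin.zero_lt_one, (hτ 0 1).2 Fin.zero_lt_one⟩

theorem meshOccursIn_of_ascent {i j : Fin n} (hij : i < j) (hπ : π i < π j)
    (hleft : ∀ z < i, π j ≤ π z) (hright : ∀ z, i < z → π z ≤ π j) :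
    MeshOccursIn (1 : Equiv.Perm (Fin 2)) {(0,0),(0,1),(1,2),(2,2)} π := by
  refine ⟨![i, j], ?_, ?_, ?_⟩
  · intro a b hab
    fin_cases a <;> fin_cases b <;> simp_all
  · intro a b
    fin_cases a <;> fin_cases b <;> simp [hπ, hπ.not_gt]
  · intro r hr z
    -- `hleft` empties the boxes `(0,0)`, `(0,1)`; `hright` empties `(1,2)`, `(2,2)`.
    rcases hr with rfl | rfl | rfl | rfl <;>
      simp [posOf, valOf, Equiv.Perm.one_def] <;> grind

theorem meshOccursIn_boxes_iff_exists_ascent :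
    MeshOccursIn (1 : Equiv.Perm (Fin 2)) {(0,0),(0,1),(1,2),(2,2)} π ↔
      ∃ i j, i < j ∧ π i < π j := by
  refine ⟨exists_ascent_of_meshOccursIn_one, fun h => ?_⟩
  obtain ⟨i, j, hij, hπ, hleft, hright⟩ := exists_ascent_maxTop_minBottom h
  exact meshOccursIn_of_ascent hij hπ hleft hright

theorem eq_revPerm_of_strictAnti (h : StrictAnti π) : π = Fin.revPerm := by
  have hid : π ∘ Fin.rev = id :=
    ((h.comp Fin.rev_strictAnti).range_inj strictMono_id).1 <| by
      rw [(π.surjective.comp Fin.rev_surjective).range_eq, Set.range_id]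
  exact Equiv.ext fun i => by simpa using congrFun hid i.rev

theorem not_exists_ascent_iff_eq_revPerm :
    (¬ ∃ i j, i < j ∧ π i < π j) ↔ π = Fin.revPerm := by
  refine ⟨fun h => eq_revPerm_of_strictAnti (strictAnti_of_not_exists_lt π.injective h), ?_⟩
  rintro rfl ⟨i, j, hij, hlt⟩
  exact (Fin.rev_strictAnti hij).not_gt hlt

theorem meshAvoids_boxes_iff_eq_revPerm :
    MeshAvoids (1 : Equiv.Perm (Fin 2)) {(0,0),(0,1),(1,2),(2,2)} π ↔ π = Fin.revPerm := by
  rw [MeshAvoids, meshOccursIn_boxes_iff_exists_ascent, not_exists_ascent_iff_eq_revPerm]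

end

/-- Every permutation containing the classical pattern
`(12, ∅)` also contains `(12, {(0,0),(0,1),(1,2),(2,2)})`; hence the two are
coincident, the unique avoider of length `n` is the decreasing permutation
`n(n-1)⋯1`, and the number of avoiders is `1`. -/
theorem stmt15 :
    (∀ (n : ℕ) (π : Equiv.Perm (Fin n)),
      MeshOccursIn (1 : Equiv.Perm (Fin 2)) (∅ : Set (ℕ × ℕ)) π →
        MeshOccursIn (1 : Equiv.Perm (Fin 2)) {(0,0),(0,1),(1,2),(2,2)} π) ∧
    (∀ (n : ℕ) (π : Equiv.Perm (Fin n)),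
      MeshAvoids (1 : Equiv.Perm (Fin 2)) (∅ : Set (ℕ × ℕ)) π ↔
        MeshAvoids (1 : Equiv.Perm (Fin 2)) {(0,0),(0,1),(1,2),(2,2)} π) ∧
    (∀ (n : ℕ) (π : Equiv.Perm (Fin n)),
      MeshAvoids (1 : Equiv.Perm (Fin 2)) {(0,0),(0,1),(1,2),(2,2)} π ↔
        ∀ i : Fin n, (π i : ℕ) = n - 1 - (i : ℕ)) ∧
    ∀ n : ℕ,
      Nat.card {π : Equiv.Perm (Fin n) //
        MeshAvoids (1 : Equiv.Perm (Fin 2)) {(0,0),(0,1),(1,2),(2,2)} π} = 1 := by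
  refine ⟨fun n π h => ?_, fun n π => ?_, fun n π => ?_, fun n => ?_⟩
  · exact meshOccursIn_boxes_iff_exists_ascent.2 (exists_ascent_of_meshOccursIn_one h)
  · refine not_congr ⟨fun h => ?_, fun h => h.mono (Set.empty_subset _)⟩
    exact meshOccursIn_boxes_iff_exists_ascent.2 (exists_ascent_of_meshOccursIn_one h)
  · simp only [meshAvoids_boxes_iff_eq_revPerm, Equiv.ext_iff, Fin.ext_iff, Fin.revPerm_apply,
      Fin.val_rev]
    exact forall_congr' fun i => by omega
  · simp [meshAvoids_boxes_iff_eq_revPerm]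
end
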